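/- arXiv:2502.17466 — 8 statements merged into one kernel-verified Lean document; each statement's English description precedes it below -/
import Mathlib

section
/- Let (H,∘) be a hypergroup and ρ a strongly regular equivalence relation on H (so that H/ρ is a group). Then for every x ∈ H, the equivalence class ρ(x) equals x ∘ S_ρ, where S_ρ = {h ∈ H : ρ(h) is the identity of the group H/ρ}. -/
open Set

/-- A hypergroup: a nonempty-set-valued binary hyperoperation that is associative
and reproductive. -/
structure Hypergroup (H : Type) where
  hmul : H → H → Set H
  nonempty : ∀ a b, (hmul a b).Nonempty
  assoc : ∀ a b c, (⋃ x ∈ hmul a b, hmul x c) = ⋃ y ∈ hmul b c, hmul a y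
  reproL : ∀ a, (⋃ x, hmul a x) = Set.univ
  reproR : ∀ a, (⋃ x, hmul x a) = Set.univ

namespace Hypergroup

variable {H : Type}

/-- Product of two subsets. -/
def smul (hg : Hypergroup H) (A B : Set H) : Set H := ⋃ a ∈ A, ⋃ b ∈ B, hg.hmul a b

/-- Hyperproduct of an element with a list of further factors. -/
def hprod (hg : Hypergroup H) : H → List H → Set H
  | a, [] => {a}
  | a, b :: l => ⋃ x ∈ hg.hmul a b, hg.hprod x l

/-- Hyperproduct of a (nonempty) list of factors. -/
def sprod (hg : Hypergroup H) : List H → Set H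
  | [] => ∅
  | a :: l => hg.hprod a l

/-- The relation β : being together in some finite hyperproduct. -/
def beta (hg : Hypergroup H) (a b : H) : Prop := ∃ l, a ∈ hg.sprod l ∧ b ∈ hg.sprod l

/-- β*, the transitive (equivalence) closure of β. -/
def betaStar (hg : Hypergroup H) : H → H → Prop := Relation.EqvGen hg.beta

/-- The relation γ : lying in hyperproducts of permuted factor lists. -/
def gamma (hg : Hypergroup H) (a b : H) : Prop :=
  ∃ l l' : List H, l.Perm l' ∧ a ∈ hg.sprod l ∧ b ∈ hg.sprod l'

/-- γ*, the transitive (equivalence) closure of γ. -/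
def gammaStar (hg : Hypergroup H) : H → H → Prop := Relation.EqvGen hg.gamma

/-- A strongly regular equivalence relation. -/
def StronglyRegular (hg : Hypergroup H) (r : H → H → Prop) : Prop :=
  Equivalence r ∧
  ∀ a b x, r a b →
    (∀ u ∈ hg.hmul a x, ∀ v ∈ hg.hmul b x, r u v) ∧
    (∀ u ∈ hg.hmul x a, ∀ v ∈ hg.hmul x b, r u v)

/-- A regular equivalence relation. -/
def Regular (hg : Hypergroup H) (r : H → H → Prop) : Prop :=
  Equivalence r ∧
  ∀ a b x, r a b →
    ((∀ u ∈ hg.hmul a x, ∃ v ∈ hg.hmul b x, r u v) ∧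
     (∀ v ∈ hg.hmul b x, ∃ u ∈ hg.hmul a x, r u v)) ∧
    ((∀ u ∈ hg.hmul x a, ∃ v ∈ hg.hmul x b, r u v) ∧
     (∀ v ∈ hg.hmul x b, ∃ u ∈ hg.hmul x a, r u v))

/-- A subhypergroup: nonempty, closed under the hyperoperation, reproductive inside. -/
def IsSubhypergroup (hg : Hypergroup H) (K : Set H) : Prop :=
  K.Nonempty ∧ (∀ a ∈ K, ∀ b ∈ K, hg.hmul a b ⊆ K) ∧
  (∀ a ∈ K, K ⊆ hg.smul {a} K) ∧ (∀ a ∈ K, K ⊆ hg.smul K {a})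

/-- A closed subhypergroup: solutions of `b ∈ a∘x`, `b ∈ x∘a` with `a,b ∈ K` lie in `K`. -/
def IsClosed (hg : Hypergroup H) (K : Set H) : Prop :=
  ∀ a ∈ K, ∀ b ∈ K, ∀ x, (b ∈ hg.hmul a x → x ∈ K) ∧ (b ∈ hg.hmul x a → x ∈ K)

/-- A complete part: if a finite hyperproduct meets it, it contains it. -/
def IsCompletePart (hg : Hypergroup H) (C : Set H) : Prop :=
  ∀ l : List H, l ≠ [] → (hg.sprod l ∩ C).Nonempty → hg.sprod l ⊆ C

/-- The β-heart `S_β` : elements whose β*-class acts as identity. -/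
def heartBeta (hg : Hypergroup H) : Set H :=
  {h | ∀ x, ∀ z ∈ hg.hmul x h, hg.betaStar z x}

/-- The γ-heart `S_γ` (the derived subhypergroup `H'`). -/
def heartGamma (hg : Hypergroup H) : Set H :=
  {h | ∀ x, ∀ z ∈ hg.hmul x h, hg.gammaStar z x}

/-- The coset `x ∘ K`. -/
def coset (hg : Hypergroup H) (K : Set H) (x : H) : Set H := hg.smul {x} K

/-- Normal subhypergroup: `x ∘ K = K ∘ x` for all `x`. -/
def IsNormal (hg : Hypergroup H) (K : Set H) : Prop :=
  ∀ x, hg.smul {x} K = hg.smul K {x}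

/-- `φ : H → G` realizes the quotient group of `H` modulo the relation `r`. -/
def IsQuotientGroupMap (hg : Hypergroup H) (r : H → H → Prop) {G : Type} [Group G]
    (φ : H → G) : Prop :=
  Function.Surjective φ ∧ (∀ a b, φ a = φ b ↔ r a b) ∧
  ∀ a b, ∀ z ∈ hg.hmul a b, φ z = φ a * φ b

/-- The set of identities of a hypergroup. -/
def Ident (hg : Hypergroup H) : Set H :=
  {e | ∀ x, x ∈ hg.hmul e x ∧ x ∈ hg.hmul x e}

/-- `C_H(x)`. -/
def Cset (hg : Hypergroup H) (x : H) : Set H :=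
  {y | (hg.Ident ∩ (hg.hmul y x ∩ hg.hmul x y)).Nonempty}

/-- A strongly regular hypergroup: identities exist and each `C_H(x)` is a singleton. -/
def IsStronglyRegularHypergroup (hg : Hypergroup H) : Prop :=
  hg.Ident.Nonempty ∧ ∀ x, ∃ y, hg.Cset x = {y}

end Hypergroup

/-- A canonical hypergroup. -/
structure CanonicalHypergroup (H : Type) extends Hypergroup H where
  comm : ∀ a b, hmul a b = hmul b a
  zero : H
  zero_hmul : ∀ x, hmul zero x = {x}
  inv : H → H
  inv_spec : ∀ x, zero ∈ hmul x (inv x)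
  inv_unique : ∀ x y, zero ∈ hmul x y → y = inv x
  reversible : ∀ x y z, x ∈ hmul y z → y ∈ hmul x (inv z)

/-- `π : H → Q` realizes the quotient hypergroup `H/K`. -/
def IsQuotientHypergroupMap {H Q : Type} (hg : Hypergroup H) (K : Set H)
    (hq : Hypergroup Q) (π : H → Q) : Prop :=
  Function.Surjective π ∧ (∀ x y, π x = π y ↔ hg.coset K x = hg.coset K y) ∧
  ∀ x y, hq.hmul (π x) (π y) = π '' hg.hmul x y

namespace Hypergroup

variable {H : Type}

theorem exists_mem_hmul_left (hg : Hypergroup H) (x y : H) : ∃ h, y ∈ hg.hmul x h :=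
  mem_iUnion.mp (hg.reproL x ▸ mem_univ y)

theorem fiber_eq_iUnion_hmul_ker (hg : Hypergroup H) {G : Type} [Group G] {φ : H → G}
    (hφ : ∀ a b, ∀ z ∈ hg.hmul a b, φ z = φ a * φ b) (x : H) :
    {y | φ x = φ y} = ⋃ h ∈ {h : H | φ h = 1}, hg.hmul x h := by
  ext y
  simp only [mem_ofPred_eq, mem_iUnion, exists_prop]
  constructor
  · intro hxy
    obtain ⟨h, hy⟩ := hg.exists_mem_hmul_left x y
    refine ⟨h, ?_, hy⟩
    rw [hφ x h y hy] at hxy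
    exact mul_eq_left.mp hxy.symm
  · rintro ⟨h, hh, hy⟩
    rw [hφ x h y hy, hh, mul_one]

end Hypergroup

open Hypergroup in
theorem stmt0_general {H : Type} (hg : Hypergroup H) (r : H → H → Prop)
    {G : Type} [Group G] (φ : H → G)
    (hφ : hg.IsQuotientGroupMap r φ) (x : H) :
    {y | r x y} = ⋃ h ∈ {h : H | φ h = 1}, hg.hmul x h := by
  obtain ⟨-, hfiber, hmul⟩ := hφ
  have hclass : {y | r x y} = {y | φ x = φ y} := Set.ext fun y => (hfiber x y).symm
  rw [hclass, hg.fiber_eq_iUnion_hmul_ker hmul]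

open Hypergroup in
/-- for a strongly regular relation ρ on a hypergroup H,
ρ(x) = x ∘ S_ρ, where S_ρ is the preimage of the identity of H/ρ. -/
theorem stmt0 {H : Type} (hg : Hypergroup H) (r : H → H → Prop)
    (hsr : hg.StronglyRegular r) {G : Type} [Group G] (φ : H → G)
    (hφ : hg.IsQuotientGroupMap r φ) (x : H) :
    {y | r x y} = ⋃ h ∈ {h : H | φ h = 1}, hg.hmul x h :=
  stmt0_general hg r φ hφ x
end

section
/- Let H be a hypergroup and K a closed subhypergroup of H. If the quotient H/K = {h∘K : h ∈ H} is a group under the operation (x∘K)·(y∘K) = (x∘y)∘K, then K is a complete part of H; in particular S_β ⊆ K, where S_β is the β-heart of H. -/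
open Set

open Hypergroup in
/-- if K is a closed subhypergroup and H/K is a group under
(x∘K)(y∘K) = (x∘y)∘K, then K is a complete part and S_β ⊆ K. -/
theorem stmt1 {H : Type} (hg : Hypergroup H) (K : Set H)
    (hsub : hg.IsSubhypergroup K) (hcl : hg.IsClosed K)
    {G : Type} [Group G] (φ : H → G)
    (hφ : hg.IsQuotientGroupMap (fun x y => hg.coset K x = hg.coset K y) φ) :
    hg.IsCompletePart K ∧ hg.heartBeta ⊆ K := by
  obtain ⟨hKne, hKmul, hKrepL, hKrepR⟩ := hsub
  obtain ⟨hsurj, hker, hhom⟩ := hφ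
  obtain ⟨k₀, hk₀⟩ := hKne
  have hcoset : ∀ k ∈ K, hg.coset K k = K := by
    intro k hk
    apply Set.Subset.antisymm
    · intro z hz
      simp only [Hypergroup.coset, Hypergroup.smul, Set.mem_iUnion,
        Set.mem_singleton_iff, exists_prop] at hz
      obtain ⟨a, rfl, b, hb, hzb⟩ := hz
      exact hKmul a hk b hb hzb
    · exact hKrepL k hk
  have hφK : ∀ k ∈ K, φ k = φ k₀ := fun k hk =>
    (hker k k₀).2 ((hcoset k hk).trans (hcoset k₀ hk₀).symm)
  have he : φ k₀ = 1 := by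
    obtain ⟨z, hz⟩ := hg.nonempty k₀ k₀
    have hzK : z ∈ K := hKmul k₀ hk₀ k₀ hk₀ hz
    have h1 := hhom k₀ k₀ z hz
    have h2 := hφK z hzK
    have : φ k₀ * φ k₀ = φ k₀ * 1 := by rw [mul_one, ← h1, h2]
    exact mul_left_cancel this
  have hmemK : ∀ x, x ∈ K ↔ φ x = 1 := by
    intro x
    constructor
    · intro hx; rw [hφK x hx, he]
    · intro hx
      have hc : hg.coset K x = K := by
        have := (hker x k₀).1 (by rw [hx, he])
        rw [this, hcoset k₀ hk₀]
      have hk₀' : k₀ ∈ hg.coset K x := hc.symm ▸ hk₀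
      simp only [Hypergroup.coset, Hypergroup.smul, Set.mem_iUnion,
        Set.mem_singleton_iff, exists_prop] at hk₀'
      obtain ⟨a, rfl, b, hb, hmem⟩ := hk₀'
      exact (hcl b hb k₀ hk₀ a).2 hmem
  have hprodφ : ∀ (l : List H) (a : H), ∀ z ∈ hg.hprod a l,
      φ z = φ a * (l.map φ).prod := by
    intro l
    induction l with
    | nil =>
      intro a z hz
      simp only [Hypergroup.hprod, Set.mem_singleton_iff] at hz
      simp [hz]
    | cons b l ih =>
      intro a z hz
      simp only [Hypergroup.hprod, Set.mem_iUnion, exists_prop] at hz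
      obtain ⟨x, hx, hzx⟩ := hz
      rw [ih x z hzx, hhom a b x hx]
      simp [mul_assoc]
  have hcp : hg.IsCompletePart K := by
    intro l hl hne
    obtain ⟨w, hw, hwK⟩ := hne
    cases l with
    | nil => exact absurd rfl hl
    | cons a t =>
      intro z hz
      have h1 : φ w = φ a * (t.map φ).prod := hprodφ t a w hw
      have h2 : φ z = φ a * (t.map φ).prod := hprodφ t a z hz
      exact (hmemK z).2 (by rw [h2, ← h1, (hmemK w).1 hwK])
  refine ⟨hcp, ?_⟩
  have hβ : ∀ a b, hg.betaStar a b → φ a = φ b := by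
    intro a b h
    induction h with
    | rel a b hab =>
      obtain ⟨l, ha, hb⟩ := hab
      cases l with
      | nil => simp [Hypergroup.sprod] at ha
      | cons c t =>
        rw [hprodφ t c a ha, hprodφ t c b hb]
    | refl => rfl
    | symm _ _ _ ih => exact ih.symm
    | trans _ _ _ _ _ ih1 ih2 => exact ih1.trans ih2
  intro h hh
  obtain ⟨z, hz⟩ := hg.nonempty k₀ h
  have h1 := hhom k₀ h z hz
  have h2 := hβ z k₀ (hh k₀ z hz)
  have : φ k₀ * φ h = φ k₀ * 1 := by rw [mul_one, ← h1, h2]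
  exact (hmemK h).2 (mul_left_cancel this)
end

section
/- Let H be a hypergroup and K a closed subhypergroup containing S_β such that K is normal (x∘K = K∘x for all x ∈ H). Then the map (x∘K, y∘K) ↦ (x∘y)∘K is a well-defined single-valued operation making H/K a group. -/
open Set

namespace Hypergroup

variable {H : Type} (hg : Hypergroup H)

lemma exists_right' (a c : H) : ∃ u, c ∈ hg.hmul a u := by
  have h : c ∈ ⋃ x, hg.hmul a x := by rw [hg.reproL]; trivial
  simpa using h

lemma exists_left' (a c : H) : ∃ u, c ∈ hg.hmul u a := by
  have h : c ∈ ⋃ x, hg.hmul x a := by rw [hg.reproR]; trivial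
  simpa using h

lemma mem_assoc₁ {a b c p z : H} (hp : p ∈ hg.hmul a b) (hz : z ∈ hg.hmul p c) :
    ∃ q ∈ hg.hmul b c, z ∈ hg.hmul a q := by
  have h : z ∈ ⋃ x ∈ hg.hmul a b, hg.hmul x c := Set.mem_biUnion hp hz
  rw [hg.assoc] at h
  simpa using h

lemma mem_assoc₂ {a b c q z : H} (hq : q ∈ hg.hmul b c) (hz : z ∈ hg.hmul a q) :
    ∃ p ∈ hg.hmul a b, z ∈ hg.hmul p c := by
  have h : z ∈ ⋃ y ∈ hg.hmul b c, hg.hmul a y := Set.mem_biUnion hq hz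
  rw [← hg.assoc] at h
  simpa using h

lemma sprod_pair (a b : H) : hg.sprod [a, b] = hg.hmul a b := by
  ext z
  simp [sprod, hprod]

lemma beta_of_mem {a b z w : H} (hz : z ∈ hg.hmul a b) (hw : w ∈ hg.hmul a b) :
    hg.beta z w := ⟨[a, b], by rw [hg.sprod_pair]; exact ⟨hz, hw⟩⟩

lemma hmul_hprod (l : List H) : ∀ x h : H,
    (⋃ c ∈ hg.hprod h l, hg.hmul x c) = ⋃ w ∈ hg.hmul x h, hg.hprod w l := by
  induction l with
  | nil =>
    intro x h
    simp [hprod]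
  | cons d t ih =>
    intro x h
    ext z
    simp only [hprod, Set.mem_iUnion, exists_prop]
    constructor
    · rintro ⟨c, ⟨u, hu, hc⟩, hz⟩
      have h1 : z ∈ ⋃ w ∈ hg.hmul x u, hg.hprod w t := by
        rw [← ih x u]; exact Set.mem_biUnion hc hz
      simp only [Set.mem_iUnion, exists_prop] at h1
      obtain ⟨w, hw, hzw⟩ := h1
      obtain ⟨v, hv, hwv⟩ := hg.mem_assoc₂ hu hw
      exact ⟨v, hv, w, hwv, hzw⟩
    · rintro ⟨w, hw, y, hy, hz⟩
      obtain ⟨u, hu, hyu⟩ := hg.mem_assoc₁ hw hy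
      have h1 : z ∈ ⋃ w ∈ hg.hmul x u, hg.hprod w t := Set.mem_biUnion hyu hz
      rw [← ih x u] at h1
      simp only [Set.mem_iUnion, exists_prop] at h1
      obtain ⟨c, hc, hzc⟩ := h1
      exact ⟨c, ⟨u, hu, hc⟩, hzc⟩

lemma betaStar_hmul_left {a b : H} (hab : hg.betaStar a b) (x : H) :
    ∀ z ∈ hg.hmul x a, ∀ w ∈ hg.hmul x b, hg.betaStar z w := by
  induction hab with
  | rel a b h =>
    intro z hz w hw
    obtain ⟨l, ha, hb⟩ := h
    cases l with
    | nil => simp [sprod] at ha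
    | cons c t =>
      simp only [sprod] at ha hb
      refine Relation.EqvGen.rel _ _ ⟨x :: c :: t, ?_, ?_⟩
      · have h1 : z ∈ ⋃ p ∈ hg.hprod c t, hg.hmul x p := Set.mem_biUnion ha hz
        rw [hg.hmul_hprod t x c] at h1
        simpa [sprod, hprod] using h1
      · have h1 : w ∈ ⋃ p ∈ hg.hprod c t, hg.hmul x p := Set.mem_biUnion hb hw
        rw [hg.hmul_hprod t x c] at h1
        simpa [sprod, hprod] using h1
  | refl a =>
    intro z hz w hw
    exact Relation.EqvGen.rel _ _ (hg.beta_of_mem hz hw)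
  | symm a b h ih =>
    intro z hz w hw
    exact Relation.EqvGen.symm _ _ (ih w hw z hz)
  | trans a b c h1 h2 ih1 ih2 =>
    intro z hz w hw
    obtain ⟨m, hm⟩ := hg.nonempty x b
    exact Relation.EqvGen.trans _ _ _ (ih1 z hz m hm) (ih2 m hm w hw)

lemma mem_heartBeta_of (u a b : H) (ha : a ∈ hg.hmul b u) (hab : hg.betaStar a b) :
    u ∈ hg.heartBeta := by
  intro x z hz
  obtain ⟨s, hs⟩ := hg.nonempty x a
  obtain ⟨v, hv, hsv⟩ := hg.mem_assoc₂ ha hs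
  have hsv' : hg.betaStar s v := hg.betaStar_hmul_left hab x s hs v hv
  obtain ⟨w, hw⟩ := hg.exists_left' v x
  obtain ⟨q, hq, hzq⟩ := hg.mem_assoc₁ hw hz
  have hqs : hg.betaStar q s := Relation.EqvGen.rel _ _ (hg.beta_of_mem hq hsv)
  have hqv : hg.betaStar q v := Relation.EqvGen.trans _ _ _ hqs hsv'
  exact hg.betaStar_hmul_left hqv w z hzq x hw

lemma mem_coset_iff {K : Set H} {x w : H} :
    w ∈ hg.coset K x ↔ ∃ k ∈ K, w ∈ hg.hmul x k := by
  simp [coset, smul]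

lemma betaStar_mem_coset {K : Set H} (hheart : hg.heartBeta ⊆ K) {z z' : H}
    (h : hg.betaStar z z') : z' ∈ hg.coset K z := by
  obtain ⟨u, hu⟩ := hg.exists_right' z z'
  have hu' : u ∈ hg.heartBeta :=
    hg.mem_heartBeta_of u z' z hu (Relation.EqvGen.symm _ _ h)
  exact hg.mem_coset_iff.2 ⟨u, hheart hu', hu⟩

lemma coset_subset {K : Set H} (hsub : hg.IsSubhypergroup K) {x y : H}
    (h : y ∈ hg.coset K x) : hg.coset K y ⊆ hg.coset K x := by
  obtain ⟨k, hk, hyk⟩ := hg.mem_coset_iff.1 h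
  intro w hw
  obtain ⟨k', hk', hwk⟩ := hg.mem_coset_iff.1 hw
  obtain ⟨q, hq, hzq⟩ := hg.mem_assoc₁ hyk hwk
  exact hg.mem_coset_iff.2 ⟨q, hsub.2.1 k hk k' hk' hq, hzq⟩

lemma coset_eq_of_betaStar {K : Set H} (hsub : hg.IsSubhypergroup K)
    (hheart : hg.heartBeta ⊆ K) {z z' : H} (h : hg.betaStar z z') :
    hg.coset K z = hg.coset K z' :=
  Set.Subset.antisymm
    (hg.coset_subset hsub (hg.betaStar_mem_coset hheart (Relation.EqvGen.symm _ _ h)))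
    (hg.coset_subset hsub (hg.betaStar_mem_coset hheart h))

lemma coset_eq_of_mem_hmul {K : Set H} (hsub : hg.IsSubhypergroup K)
    (hheart : hg.heartBeta ⊆ K) {x y z z' : H} (hz : z ∈ hg.hmul x y)
    (hz' : z' ∈ hg.hmul x y) : hg.coset K z = hg.coset K z' :=
  hg.coset_eq_of_betaStar hsub hheart (Relation.EqvGen.rel _ _ (hg.beta_of_mem hz hz'))

lemma smul_assoc' (A B C : Set H) :
    hg.smul (hg.smul A B) C = hg.smul A (hg.smul B C) := by
  ext w
  simp only [smul, Set.mem_iUnion, exists_prop]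
  constructor
  · rintro ⟨p, ⟨a, ha, b, hb, hp⟩, c, hc, hw⟩
    obtain ⟨q, hq, hwq⟩ := hg.mem_assoc₁ hp hw
    exact ⟨a, ha, q, ⟨b, hb, c, hc, hq⟩, hwq⟩
  · rintro ⟨a, ha, q, ⟨b, hb, c, hc, hq⟩, hw⟩
    obtain ⟨p, hp, hwp⟩ := hg.mem_assoc₂ hq hw
    exact ⟨p, ⟨a, ha, b, hb, hp⟩, c, hc, hwp⟩

lemma smul_singleton_singleton (x y : H) : hg.smul {x} {y} = hg.hmul x y := by
  ext w
  simp [smul]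

lemma coset_hmul {K : Set H} (hsub : hg.IsSubhypergroup K)
    (hheart : hg.heartBeta ⊆ K) {x y z : H} (hz : z ∈ hg.hmul x y) :
    hg.coset K z = hg.smul (hg.hmul x y) K := by
  apply Set.Subset.antisymm
  · intro w hw
    obtain ⟨k, hk, h⟩ := hg.mem_coset_iff.1 hw
    simp only [smul, Set.mem_iUnion, exists_prop]
    exact ⟨z, hz, k, hk, h⟩
  · intro w hw
    simp only [smul, Set.mem_iUnion, exists_prop] at hw
    obtain ⟨z', hz', k, hk, hwk⟩ := hw
    rw [hg.coset_eq_of_mem_hmul hsub hheart hz hz']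
    exact hg.mem_coset_iff.2 ⟨k, hk, hwk⟩

lemma coset_of_mem {K : Set H} (hsub : hg.IsSubhypergroup K) {e : H} (he : e ∈ K) :
    hg.coset K e = K := by
  apply Set.Subset.antisymm
  · intro w hw
    obtain ⟨k, hk, h⟩ := hg.mem_coset_iff.1 hw
    exact hsub.2.1 e he k hk h
  · exact hsub.2.2.1 e he

end Hypergroup

def cosetSetoid {H : Type} (hg : Hypergroup H) (K : Set H) : Setoid H :=
  ⟨fun x y => hg.coset K x = hg.coset K y, ⟨fun _ => rfl, Eq.symm, Eq.trans⟩⟩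

open Hypergroup in
/-- if K is a closed normal subhypergroup containing S_β, then
(x∘K, y∘K) ↦ (x∘y)∘K is a well-defined single-valued operation making H/K a group. -/
theorem stmt2 {H : Type} (hg : Hypergroup H) (K : Set H)
    (hsub : hg.IsSubhypergroup K) (hcl : hg.IsClosed K)
    (hheart : hg.heartBeta ⊆ K) (hnorm : hg.IsNormal K) :
    (∀ x y : H, ∀ z ∈ hg.hmul x y, ∀ z' ∈ hg.hmul x y,
        hg.coset K z = hg.coset K z') ∧
    ∃ (G : Type) (_ : Group G) (φ : H → G),
      hg.IsQuotientGroupMap (fun x y => hg.coset K x = hg.coset K y) φ := by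
  classical
  have sv : ∀ x y : H, ∀ z ∈ hg.hmul x y, ∀ z' ∈ hg.hmul x y,
      hg.coset K z = hg.coset K z' :=
    fun x y z hz z' hz' => hg.coset_eq_of_mem_hmul hsub hheart hz hz'
  refine ⟨sv, ?_⟩
  have key : ∀ x y z : H, z ∈ hg.hmul x y →
      hg.coset K z = hg.smul {x} (hg.smul {y} K) := by
    intro x y z hz
    rw [hg.coset_hmul hsub hheart hz, ← hg.smul_singleton_singleton x y, hg.smul_assoc']
  have cong : ∀ x x' y y' : H, hg.coset K x = hg.coset K x' →
      hg.coset K y = hg.coset K y' →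
      ∀ z ∈ hg.hmul x y, ∀ z' ∈ hg.hmul x' y', hg.coset K z = hg.coset K z' := by
    intro x x' y y' hx hy z hz z' hz'
    have hy' : hg.smul {y} K = hg.smul {y'} K := hy
    have hx' : hg.smul {x} K = hg.smul {x'} K := hx
    rw [key x y z hz, key x' y' z' hz']
    calc hg.smul {x} (hg.smul {y} K)
        = hg.smul {x} (hg.smul K {y'}) := by rw [hy', ← hnorm y']
      _ = hg.smul (hg.smul {x} K) {y'} := (hg.smul_assoc' _ _ _).symm
      _ = hg.smul (hg.smul {x'} K) {y'} := by rw [hx']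
      _ = hg.smul {x'} (hg.smul {y'} K) := by rw [hg.smul_assoc', hnorm y']
  obtain ⟨e, he⟩ := hsub.1
  let s : Setoid H := cosetSetoid hg K
  let G := Quotient s
  let pick : H → H → H := fun x y => (hg.nonempty x y).choose
  have pick_mem : ∀ x y, pick x y ∈ hg.hmul x y := fun x y => (hg.nonempty x y).choose_spec
  letI : Mul G := ⟨Quotient.lift₂ (fun x y => (Quotient.mk s (pick x y)))
    (fun x y x' y' hx hy => Quotient.sound
      (cong x x' y y' hx hy _ (pick_mem x y) _ (pick_mem x' y')))⟩
  letI : One G := ⟨Quotient.mk s e⟩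
  let inv0 : H → H := fun x => (hg.exists_left' x e).choose
  have inv0_mem : ∀ x, e ∈ hg.hmul (inv0 x) x := fun x => (hg.exists_left' x e).choose_spec
  letI : Inv G := ⟨fun g => Quotient.mk s (inv0 g.out)⟩
  have mul_mk : ∀ x y : H, (Quotient.mk s x) * (Quotient.mk s y) = Quotient.mk s (pick x y) :=
    fun x y => rfl
  have out_r : ∀ g : G, hg.coset K g.out = hg.coset K (g.out) := fun g => rfl
  have mk_out : ∀ x : H, hg.coset K ((Quotient.mk s x).out) = hg.coset K x :=
    fun x => Quotient.exact ((Quotient.mk s x).out_eq)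
  letI grp : Group G := Group.ofLeftAxioms
    (by
      intro a b c
      induction a using Quotient.inductionOn with | _ x => ?_
      induction b using Quotient.inductionOn with | _ y => ?_
      induction c using Quotient.inductionOn with | _ z => ?_
      rw [mul_mk, mul_mk, mul_mk, mul_mk]
      apply Quotient.sound
      obtain ⟨q, hq, hmem⟩ := hg.mem_assoc₁ (pick_mem x y) (pick_mem (pick x y) z)
      exact cong x x q (pick y z) rfl (sv y z q hq _ (pick_mem y z)) _ hmem _
        (pick_mem x (pick y z)))
    (by
      intro a
      induction a using Quotient.inductionOn with | _ x => ?_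
      show (Quotient.mk s e) * (Quotient.mk s x) = Quotient.mk s x
      rw [mul_mk]
      apply Quotient.sound
      show hg.coset K (pick e x) = hg.coset K x
      have heK : hg.smul {e} K = K := hg.coset_of_mem hsub he
      calc hg.coset K (pick e x)
          = hg.smul {e} (hg.smul {x} K) := key e x _ (pick_mem e x)
        _ = hg.smul {e} (hg.smul K {x}) := by rw [← hnorm x]
        _ = hg.smul (hg.smul {e} K) {x} := (hg.smul_assoc' _ _ _).symm
        _ = hg.smul K {x} := by rw [heK]
        _ = hg.smul {x} K := (hnorm x).symm
        _ = hg.coset K x := rfl)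
    (by
      intro a
      induction a using Quotient.inductionOn with | _ x => ?_
      show (Quotient.mk s (inv0 (Quotient.mk s x).out)) * (Quotient.mk s x) = Quotient.mk s e
      rw [mul_mk]
      apply Quotient.sound
      show hg.coset K (pick (inv0 (Quotient.mk s x).out) x) = hg.coset K e
      set y := (Quotient.mk s x).out with hydef
      exact cong (inv0 y) (inv0 y) x y rfl (mk_out x).symm _
        (pick_mem (inv0 y) x) e (inv0_mem y))
  refine ⟨G, grp, Quotient.mk s, ?_, ?_, ?_⟩
  · exact fun q => ⟨q.out, q.out_eq⟩
  · exact fun a b => ⟨fun h => Quotient.exact h, fun h => Quotient.sound h⟩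
  · intro a b z hz
    rw [mul_mk]
    exact Quotient.sound (sv a b z hz _ (pick_mem a b))
end

section
/- Let H be a hypergroup and K a closed subhypergroup with S_γ ⊆ K (where S_γ is the γ-heart of H, equivalently the derived subhypergroup H'). Then K is normal in H, i.e. x∘K = K∘x for all x ∈ H, and H/K is an abelian group. -/
/-!
The γ-classes form an abelian group `Γ = H/γ*`, and the class map `ψ : H → Γ` satisfies
`ψ z = ψ a * ψ b` whenever `z ∈ a ∘ b`; its fibre over `1` lies in `S_γ`. A closed subhypergroup
`K ⊇ S_γ` is then the full preimage `ψ⁻¹ N` of the subgroup `N = ψ K`. Reproductivity gives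
`z ∈ x ∘ K ↔ (ψ x)⁻¹ ψ z ∈ N` and `z ∈ K ∘ x ↔ ψ z (ψ x)⁻¹ ∈ N`, which agree since `Γ` is abelian,
and the cosets `x ∘ K` correspond exactly to the elements of `Γ / N`.
-/

open Set

noncomputable abbrev CommGroup.ofExistsMulEq {M : Type*} [CommSemigroup M] [Nonempty M]
    (hdiv : ∀ a b : M, ∃ x, a * x = b) : CommGroup M :=
  let m := Classical.arbitrary M
  let e := (hdiv m m).choose
  have mul_e (a : M) : a * e = a := by
    obtain ⟨y, rfl⟩ := hdiv m a
    rw [mul_right_comm, (hdiv m m).choose_spec]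
  { one := e
    inv := fun a => (hdiv a e).choose
    mul_one := mul_e
    one_mul := fun a => (mul_comm e a).trans (mul_e a)
    inv_mul_cancel := fun a => (mul_comm _ a).trans (hdiv a e).choose_spec
    mul_comm := mul_comm }

namespace Hypergroup

variable {H : Type} (hg : Hypergroup H)

theorem mem_smul_iff {A B : Set H} {z : H} :
    z ∈ hg.smul A B ↔ ∃ a ∈ A, ∃ b ∈ B, z ∈ hg.hmul a b := by
  simp [smul]

theorem mem_hmul_assoc {a b c z : H} :
    (∃ t ∈ hg.hmul a b, z ∈ hg.hmul t c) ↔ ∃ y ∈ hg.hmul b c, z ∈ hg.hmul a y := by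
  simpa using Set.ext_iff.mp (hg.assoc a b c) z

theorem exists_mem_hmul_right (a b : H) : ∃ x, b ∈ hg.hmul a x := by
  simpa using Set.ext_iff.mp (hg.reproL a) b

theorem exists_mem_hmul_left_s3 (a b : H) : ∃ x, b ∈ hg.hmul x a := by
  simpa using Set.ext_iff.mp (hg.reproR a) b

section Products

variable {hg}

theorem mem_hprod_append_singleton {c a x z : H} {l : List H} (ha : a ∈ hg.hprod c l)
    (hz : z ∈ hg.hmul a x) : z ∈ hg.hprod c (l ++ [x]) := by
  induction l generalizing c with
  | nil =>
    obtain rfl : a = c := ha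
    simpa [hprod] using hz
  | cons d l ih =>
    simp only [hprod, List.cons_append, mem_iUnion] at ha ⊢
    obtain ⟨y, hy, ha⟩ := ha
    exact ⟨y, hy, ih ha⟩

theorem mem_hprod_cons {c a x z : H} {l : List H} (ha : a ∈ hg.hprod c l)
    (hz : z ∈ hg.hmul x a) : z ∈ hg.hprod x (c :: l) := by
  induction l generalizing c with
  | nil =>
    obtain rfl : a = c := ha
    simpa [hprod] using hz
  | cons d l ih =>
    simp only [hprod, mem_iUnion] at ha ⊢
    obtain ⟨y, hy, ha⟩ := ha
    obtain ⟨y', hy', hz'⟩ : ∃ y' ∈ hg.hmul x y, z ∈ hg.hprod y' l := by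
      simpa [hprod] using ih ha
    obtain ⟨w, hw, hy'w⟩ := hg.mem_hmul_assoc.mpr ⟨y, hy, hy'⟩
    exact ⟨w, hw, y', hy'w, hz'⟩

theorem mem_sprod_singleton (a : H) : a ∈ hg.sprod [a] :=
  mem_singleton a

theorem mem_sprod_append_singleton {a x z : H} {l : List H} (ha : a ∈ hg.sprod l)
    (hz : z ∈ hg.hmul a x) : z ∈ hg.sprod (l ++ [x]) := by
  cases l with
  | nil => exact absurd ha (notMem_empty a)
  | cons c l => exact mem_hprod_append_singleton ha hz

theorem mem_sprod_cons {a x z : H} {l : List H} (ha : a ∈ hg.sprod l)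
    (hz : z ∈ hg.hmul x a) : z ∈ hg.sprod (x :: l) := by
  cases l with
  | nil => exact absurd ha (notMem_empty a)
  | cons c l => exact mem_hprod_cons ha hz

theorem mem_sprod_pair {a b z : H} (hz : z ∈ hg.hmul a b) : z ∈ hg.sprod [a, b] :=
  mem_sprod_append_singleton (mem_sprod_singleton a) hz

end Products

section Gamma

variable {hg}

theorem gamma_refl (a : H) : hg.gamma a a :=
  ⟨[a], [a], .refl _, mem_sprod_singleton a, mem_sprod_singleton a⟩

theorem gamma_of_mem_hmul_swap {a b z z' : H} (hz : z ∈ hg.hmul a b) (hz' : z' ∈ hg.hmul b a) :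
    hg.gamma z z' :=
  ⟨[a, b], [b, a], .swap b a [], mem_sprod_pair hz, mem_sprod_pair hz'⟩

theorem gamma.hmul_right {a b x z z' : H} (h : hg.gamma a b) (hz : z ∈ hg.hmul a x)
    (hz' : z' ∈ hg.hmul b x) : hg.gamma z z' := by
  obtain ⟨l, l', hl, ha, hb⟩ := h
  exact ⟨l ++ [x], l' ++ [x], hl.append_right [x],
    mem_sprod_append_singleton ha hz, mem_sprod_append_singleton hb hz'⟩

theorem gamma.hmul_left {a b x z z' : H} (h : hg.gamma a b) (hz : z ∈ hg.hmul x a)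
    (hz' : z' ∈ hg.hmul x b) : hg.gamma z z' := by
  obtain ⟨l, l', hl, ha, hb⟩ := h
  exact ⟨x :: l, x :: l', hl.cons x, mem_sprod_cons ha hz, mem_sprod_cons hb hz'⟩

end Gamma

def IsHmulHom {G : Type} [Mul G] (f : H → G) : Prop :=
  ∀ a b, ∀ z ∈ hg.hmul a b, f z = f a * f b

/-- `Quot` identifies exactly the γ*-classes, see `Quot.eqvGen_exact`. -/
def FundamentalGroup : Type := Quot hg.gamma

def toFundamentalGroup (x : H) : hg.FundamentalGroup := Quot.mk _ x

theorem toFundamentalGroup_surjective : Function.Surjective hg.toFundamentalGroup :=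
  Quot.mk_surjective

noncomputable instance : Mul hg.FundamentalGroup where
  mul := Quot.lift₂ (fun a b => hg.toFundamentalGroup (hg.nonempty a b).some)
    (fun _ _ _ h => Quot.sound (h.hmul_left (hg.nonempty _ _).some_mem (hg.nonempty _ _).some_mem))
    (fun _ _ _ h => Quot.sound (h.hmul_right (hg.nonempty _ _).some_mem (hg.nonempty _ _).some_mem))

theorem isHmulHom_toFundamentalGroup : hg.IsHmulHom hg.toFundamentalGroup := fun a b _ hz =>
  Quot.sound ((gamma_refl a).hmul_right hz (hg.nonempty a b).some_mem)

noncomputable instance : CommSemigroup hg.FundamentalGroup where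
  mul_assoc A B C := by
    obtain ⟨a, rfl⟩ := hg.toFundamentalGroup_surjective A
    obtain ⟨b, rfl⟩ := hg.toFundamentalGroup_surjective B
    obtain ⟨c, rfl⟩ := hg.toFundamentalGroup_surjective C
    obtain ⟨t, ht⟩ := hg.nonempty a b
    obtain ⟨w, hw⟩ := hg.nonempty t c
    obtain ⟨y, hy, hw'⟩ := hg.mem_hmul_assoc.mp ⟨t, ht, hw⟩
    rw [← hg.isHmulHom_toFundamentalGroup _ _ _ ht, ← hg.isHmulHom_toFundamentalGroup _ _ _ hw,
      ← hg.isHmulHom_toFundamentalGroup _ _ _ hy, ← hg.isHmulHom_toFundamentalGroup _ _ _ hw']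
  mul_comm A B := by
    obtain ⟨a, rfl⟩ := hg.toFundamentalGroup_surjective A
    obtain ⟨b, rfl⟩ := hg.toFundamentalGroup_surjective B
    obtain ⟨z, hz⟩ := hg.nonempty a b
    obtain ⟨z', hz'⟩ := hg.nonempty b a
    rw [← hg.isHmulHom_toFundamentalGroup _ _ _ hz, ← hg.isHmulHom_toFundamentalGroup _ _ _ hz']
    exact Quot.sound (gamma_of_mem_hmul_swap hz hz')

instance [Nonempty H] : Nonempty hg.FundamentalGroup :=
  ⟨hg.toFundamentalGroup (Classical.arbitrary H)⟩

noncomputable instance [Nonempty H] : CommGroup hg.FundamentalGroup :=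
  .ofExistsMulEq fun A B => by
    obtain ⟨a, rfl⟩ := hg.toFundamentalGroup_surjective A
    obtain ⟨b, rfl⟩ := hg.toFundamentalGroup_surjective B
    obtain ⟨x, hx⟩ := hg.exists_mem_hmul_right a b
    exact ⟨hg.toFundamentalGroup x, (hg.isHmulHom_toFundamentalGroup _ _ _ hx).symm⟩

theorem mem_heartGamma_of_toFundamentalGroup_eq_one [Nonempty H] {h : H}
    (hh : hg.toFundamentalGroup h = 1) : h ∈ hg.heartGamma := fun x z hz =>
  Quot.eqvGen_exact (show hg.toFundamentalGroup z = hg.toFundamentalGroup x by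
    rw [hg.isHmulHom_toFundamentalGroup _ _ _ hz, hh, mul_one])

section MulMap

variable {G : Type} [Group G] {f : H → G}

theorem exists_mem_map_eq_one (hf : hg.IsHmulHom f) {K : Set H}
    (hsub : hg.IsSubhypergroup K) : ∃ e ∈ K, f e = 1 := by
  obtain ⟨k, hk⟩ := hsub.1
  obtain ⟨e, he, _, rfl, hk'⟩ := hg.mem_smul_iff.mp (hsub.2.2.2 k hk hk)
  exact ⟨e, he, right_eq_mul.mp (hf _ _ _ hk')⟩

def imageSubgroup (hf : hg.IsHmulHom f) {K : Set H}
    (hsub : hg.IsSubhypergroup K) (hcl : hg.IsClosed K) : Subgroup G where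
  carrier := f '' K
  mul_mem' := by
    rintro _ _ ⟨a, ha, rfl⟩ ⟨b, hb, rfl⟩
    obtain ⟨z, hz⟩ := hg.nonempty a b
    exact ⟨z, hsub.2.1 a ha b hb hz, hf a b z hz⟩
  one_mem' := hg.exists_mem_map_eq_one hf hsub
  inv_mem' := by
    rintro _ ⟨k, hk, rfl⟩
    obtain ⟨e, he, hfe⟩ := hg.exists_mem_map_eq_one hf hsub
    obtain ⟨t, ht⟩ := hg.exists_mem_hmul_right k e
    have hkt : f k * f t = 1 := by rw [← hf k t e ht, hfe]
    exact ⟨t, (hcl k hk e he t).1 ht, eq_inv_of_mul_eq_one_right hkt⟩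

theorem preimage_imageSubgroup (hf : hg.IsHmulHom f) {K : Set H}
    (hsub : hg.IsSubhypergroup K) (hcl : hg.IsClosed K) (hker : ∀ x, f x = 1 → x ∈ K) :
    f ⁻¹' (hg.imageSubgroup hf hsub hcl) = K := by
  refine Subset.antisymm ?_ fun x hx => ⟨x, hx, rfl⟩
  rintro x ⟨k, hk, hkx⟩
  obtain ⟨t, ht⟩ := hg.exists_mem_hmul_right k x
  have ht1 : f t = 1 := left_eq_mul.mp (by rw [← hf k t x ht, hkx])
  exact hsub.2.1 k hk t (hker t ht1) ht

theorem mem_coset_preimage_iff (hf : hg.IsHmulHom f)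
    (N : Subgroup G) {x z : H} : z ∈ hg.coset (f ⁻¹' N) x ↔ (f x)⁻¹ * f z ∈ N := by
  simp only [coset, mem_smul_iff, mem_singleton_iff, exists_eq_left, mem_preimage,
    SetLike.mem_coe]
  constructor
  · rintro ⟨k, hk, hz⟩
    rwa [hf x k z hz, inv_mul_cancel_left]
  · intro h
    obtain ⟨t, ht⟩ := hg.exists_mem_hmul_right x z
    rw [hf x t z ht, inv_mul_cancel_left] at h
    exact ⟨t, h, ht⟩

theorem mem_smul_preimage_iff (hf : hg.IsHmulHom f)
    (N : Subgroup G) {x z : H} : z ∈ hg.smul (f ⁻¹' N) {x} ↔ f z * (f x)⁻¹ ∈ N := by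
  simp only [mem_smul_iff, mem_singleton_iff, exists_eq_left, mem_preimage, SetLike.mem_coe]
  constructor
  · rintro ⟨k, hk, hz⟩
    rwa [hf k x z hz, mul_inv_cancel_right]
  · intro h
    obtain ⟨t, ht⟩ := hg.exists_mem_hmul_left_s3 x z
    rw [hf t x z ht, mul_inv_cancel_right] at h
    exact ⟨t, h, ht⟩

theorem isNormal_preimage (hf : hg.IsHmulHom f)
    (N : Subgroup G) [hN : N.Normal] : hg.IsNormal (f ⁻¹' N) := fun _ =>
  Set.ext fun _ => (hg.mem_coset_preimage_iff hf N).trans <|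
    hN.mem_comm_iff.trans (hg.mem_smul_preimage_iff hf N).symm

theorem isQuotientGroupMap_preimage (hf : hg.IsHmulHom f) (hsurj : Function.Surjective f)
    (N : Subgroup G) [N.Normal] :
    hg.IsQuotientGroupMap (fun x y => hg.coset (f ⁻¹' N) x = hg.coset (f ⁻¹' N) y)
      (fun x => (f x : G ⧸ N)) := by
  have hcoset (x : H) : hg.coset (f ⁻¹' N) x = {z | (f x : G ⧸ N) = f z} :=
    Set.ext fun _ => (hg.mem_coset_preimage_iff hf N).trans QuotientGroup.eq.symm
  refine ⟨QuotientGroup.mk_surjective.comp hsurj, fun a b => ?_, fun a b z hz => ?_⟩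
  · dsimp only
    rw [hcoset, hcoset]
    refine ⟨fun h => by rw [h], fun h => ?_⟩
    have hb : b ∈ {z | (f b : G ⧸ N) = f z} := rfl
    rwa [← h] at hb
  · simp only [hf a b z hz, QuotientGroup.mk_mul]

end MulMap

end Hypergroup

open Hypergroup in
/-- if K is a closed subhypergroup with S_γ ⊆ K, then K is normal
and H/K is an abelian group. -/
theorem stmt3 {H : Type} (hg : Hypergroup H) (K : Set H)
    (hsub : hg.IsSubhypergroup K) (hcl : hg.IsClosed K)
    (hheart : hg.heartGamma ⊆ K) :
    hg.IsNormal K ∧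
    ∃ (G : Type) (_ : CommGroup G) (φ : H → G),
      hg.IsQuotientGroupMap (fun x y => hg.coset K x = hg.coset K y) φ := by
  have : Nonempty H := hsub.1.to_type
  have hψ := hg.isHmulHom_toFundamentalGroup
  have hker (x : H) (hx : hg.toFundamentalGroup x = 1) : x ∈ K :=
    hheart (hg.mem_heartGamma_of_toFundamentalGroup_eq_one hx)
  obtain ⟨N, rfl⟩ : ∃ N : Subgroup hg.FundamentalGroup, hg.toFundamentalGroup ⁻¹' N = K :=
    ⟨_, hg.preimage_imageSubgroup hψ hsub hcl hker⟩
  exact ⟨hg.isNormal_preimage hψ N, _, inferInstance, _,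
    hg.isQuotientGroupMap_preimage hψ hg.toFundamentalGroup_surjective N⟩
end

section
/- In a hypergroup H, every regular equivalence relation containing the relation β is strongly regular. -/
open Set

open Hypergroup in
/-- every regular equivalence relation containing β is strongly regular. -/
theorem stmt4 {H : Type} (hg : Hypergroup H) (r : H → H → Prop)
    (hreg : hg.Regular r) (hβ : ∀ a b, hg.beta a b → r a b) :
    hg.StronglyRegular r := by
  obtain ⟨heqv, hreg'⟩ := hreg
  refine ⟨heqv, fun a b x hab => ?_⟩
  have key : ∀ p q : H, ∀ u ∈ hg.hmul p q, ∀ v ∈ hg.hmul p q, r u v := by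
    intro p q u hu v hv
    apply hβ
    refine ⟨[p, q], ?_, ?_⟩ <;>
      simp [Hypergroup.sprod, Hypergroup.hprod] <;>
      [exact hu; exact hv]
  obtain ⟨⟨h1, _⟩, ⟨h3, _⟩⟩ := hreg' a b x hab
  constructor
  · intro u hu v hv
    obtain ⟨v', hv', hr⟩ := h1 u hu
    exact heqv.trans hr (key b x v' hv' v hv)
  · intro u hu v hv
    obtain ⟨v', hv', hr⟩ := h3 u hu
    exact heqv.trans hr (key x b v' hv' v hv)
end

section
/- Let H be a canonical hypergroup and K a canonical subhypergroup. Then the heart of the quotient hypergroup H/K equals (S_β ∘ K)/K, i.e. S_{β_{H/K}} = {h∘K : h ∈ S_β ∘ K}, where S_β is the heart of H. -/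
open Set

namespace StmtSix

open Hypergroup

variable {H : Type}

/-! ### General hypergroup lemmas -/

lemma assoc_mem1 (hg : Hypergroup H) {x c d e z : H} (hz : z ∈ hg.hmul x c)
    (hc : c ∈ hg.hmul d e) : ∃ u ∈ hg.hmul x d, z ∈ hg.hmul u e := by
  have h := hg.assoc x d e
  have hm : z ∈ ⋃ y ∈ hg.hmul d e, hg.hmul x y := Set.mem_biUnion hc hz
  rw [← h] at hm
  simpa using hm

lemma assoc_mem2 (hg : Hypergroup H) {x d e u z : H} (hu : u ∈ hg.hmul x d)
    (hz : z ∈ hg.hmul u e) : ∃ c ∈ hg.hmul d e, z ∈ hg.hmul x c := by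
  have h := hg.assoc x d e
  have hm : z ∈ ⋃ w ∈ hg.hmul x d, hg.hmul w e := Set.mem_biUnion hu hz
  rw [h] at hm
  simpa using hm

lemma hprod_cons (hg : Hypergroup H) (l : List H) :
    ∀ a b, hg.hprod a (b :: l) = ⋃ w ∈ hg.hprod b l, hg.hmul a w := by
  induction l with
  | nil =>
      intro a b
      show (⋃ x ∈ hg.hmul a b, hg.hprod x []) = _
      simp [Hypergroup.hprod]
  | cons c t ih =>
      intro a b
      show (⋃ x ∈ hg.hmul a b, hg.hprod x (c :: t)) = _
      ext z
      simp only [Set.mem_iUnion, exists_prop, ih]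
      constructor
      · rintro ⟨x, hx, w, hw, hzw⟩
        obtain ⟨y, hy, hz⟩ := assoc_mem2 hg hx hzw
        exact ⟨y, ⟨w, hw, hy⟩, hz⟩
      · rintro ⟨y, ⟨w, hw, hy⟩, hz⟩
        obtain ⟨x, hx, hzx⟩ := assoc_mem1 hg hz hy
        exact ⟨x, hx, w, hw, hzx⟩

lemma betaStar_stable (hg : Hypergroup H) {a b : H} (h : hg.betaStar a b) :
    ∀ u x z, x ∈ hg.hmul u a → z ∈ hg.hmul u b → hg.betaStar x z := by
  induction h with
  | rel a b hab =>
      intro u x z hx hz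
      obtain ⟨l, hal, hbl⟩ := hab
      match l with
      | [] => exact absurd hal (by simp [Hypergroup.sprod])
      | c :: t =>
          apply Relation.EqvGen.rel
          refine ⟨u :: c :: t, ?_, ?_⟩
          · show x ∈ hg.hprod u (c :: t)
            rw [hprod_cons]
            exact Set.mem_biUnion hal hx
          · show z ∈ hg.hprod u (c :: t)
            rw [hprod_cons]
            exact Set.mem_biUnion hbl hz
  | refl a =>
      intro u x z hx hz
      apply Relation.EqvGen.rel
      refine ⟨[u, a], ?_, ?_⟩
      · show x ∈ hg.hprod u [a]
        rw [hprod_cons]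
        simpa [Hypergroup.hprod] using hx
      · show z ∈ hg.hprod u [a]
        rw [hprod_cons]
        simpa [Hypergroup.hprod] using hz
  | symm a b _ ih =>
      intro u x z hx hz
      exact Relation.EqvGen.symm _ _ (ih u z x hz hx)
  | trans a b c _ _ ih1 ih2 =>
      intro u x z hx hz
      obtain ⟨y, hy⟩ := hg.nonempty u b
      exact Relation.EqvGen.trans _ _ _ (ih1 u x y hx hy) (ih2 u y z hy hz)

/-! ### Canonical hypergroup lemmas -/

variable (C : CanonicalHypergroup H)

lemma hmul_zero (x : H) : C.hmul x C.zero = {x} := by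
  rw [C.comm, C.zero_hmul]

lemma mem_hmul_zero (x : H) : x ∈ C.hmul x C.zero := by
  rw [hmul_zero]; exact rfl

lemma inv_inv (x : H) : C.inv (C.inv x) = x :=
  (C.inv_unique (C.inv x) x (by rw [C.comm]; exact C.inv_spec x)).symm

lemma rev2 {x y z : H} (h : z ∈ C.hmul x y) : x ∈ C.hmul z (C.inv y) :=
  C.reversible z x y h

lemma zero_mem_S : C.zero ∈ C.toHypergroup.heartBeta := by
  intro x z hz
  rw [hmul_zero] at hz
  cases hz
  exact Relation.EqvGen.refl x

lemma S_mul {s t w : H} (hs : s ∈ C.toHypergroup.heartBeta)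
    (ht : t ∈ C.toHypergroup.heartBeta) (hw : w ∈ C.hmul s t) :
    w ∈ C.toHypergroup.heartBeta := by
  intro x z hz
  obtain ⟨u, hu, hzu⟩ := assoc_mem1 C.toHypergroup hz hw
  exact Relation.EqvGen.trans _ _ _ (ht u z hzu) (hs x u hu)

lemma inv_S {s : H} (hs : s ∈ C.toHypergroup.heartBeta) :
    C.inv s ∈ C.toHypergroup.heartBeta := by
  intro x z hz
  have hx : x ∈ C.hmul z s := by
    have := rev2 C hz
    rwa [inv_inv] at this
  exact Relation.EqvGen.symm _ _ (hs z x hx)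

lemma class_sub {a b : H} (h : C.toHypergroup.betaStar a b) :
    ∃ c ∈ C.toHypergroup.heartBeta, b ∈ C.hmul a c := by
  have hb0 : b ∈ C.hmul C.zero b := by rw [C.zero_hmul]; exact rfl
  obtain ⟨c, hc, hbc⟩ := assoc_mem2 C.toHypergroup (C.inv_spec a) hb0
  refine ⟨c, ?_, hbc⟩
  intro x z hz
  obtain ⟨u, hu, hzu⟩ := assoc_mem1 C.toHypergroup hz hc
  have hx : x ∈ C.hmul u a := by
    have := rev2 C hu
    rwa [inv_inv] at this
  exact Relation.EqvGen.symm _ _ (betaStar_stable C.toHypergroup h u x z hx hzu)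

/-! ### Subhypergroup lemmas -/

variable {K : Set H}

lemma KK (hsub : C.toHypergroup.IsSubhypergroup K) {k k' : H} (hk : k ∈ K) (hk' : k' ∈ K) : C.hmul k k' ⊆ K :=
  hsub.2.1 k hk k' hk'

lemma inv_K (hsub : C.toHypergroup.IsSubhypergroup K) (h0 : C.zero ∈ K) {k : H} (hk : k ∈ K) : C.inv k ∈ K := by
  have h := hsub.2.2.1 k hk h0
  simp only [Hypergroup.smul, Set.mem_iUnion, Set.mem_singleton_iff, exists_prop] at h
  obtain ⟨a, ha, k', hk', h00⟩ := h
  cases ha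
  exact (C.inv_unique k k' h00) ▸ hk'

lemma mem_coset_iff {x y : H} :
    y ∈ C.toHypergroup.coset K x ↔ ∃ k ∈ K, y ∈ C.hmul x k := by
  simp [Hypergroup.coset, Hypergroup.smul]

lemma mem_coset_self (h0 : C.zero ∈ K) (x : H) : x ∈ C.toHypergroup.coset K x :=
  (mem_coset_iff C).2 ⟨C.zero, h0, mem_hmul_zero C x⟩

lemma coset_eq_of_mem (hsub : C.toHypergroup.IsSubhypergroup K) (h0 : C.zero ∈ K) {u w k : H} (hk : k ∈ K) (hw : w ∈ C.hmul u k) :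
    C.toHypergroup.coset K w = C.toHypergroup.coset K u := by
  ext y
  rw [mem_coset_iff, mem_coset_iff]
  constructor
  · rintro ⟨k1, hk1, hy⟩
    obtain ⟨m, hm, hym⟩ := assoc_mem2 C.toHypergroup hw hy
    exact ⟨m, KK C hsub hk hk1 hm, hym⟩
  · rintro ⟨k2, hk2, hy⟩
    have hu : u ∈ C.hmul w (C.inv k) := rev2 C hw
    obtain ⟨m, hm, hym⟩ := assoc_mem2 C.toHypergroup hu hy
    exact ⟨m, KK C hsub (inv_K C hsub h0 hk) hk2 hm, hym⟩

/-! ### The relation `InSK` : `b ∈ a ∘ S_β ∘ K` -/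

def InSK (C : CanonicalHypergroup H) (K : Set H) (a b : H) : Prop :=
  ∃ s ∈ C.toHypergroup.heartBeta, ∃ k ∈ K, ∃ u ∈ C.hmul a s, b ∈ C.hmul u k

lemma InSK_of_memK (h0 : C.zero ∈ K) {a b k : H} (hk : k ∈ K) (hb : b ∈ C.hmul a k) :
    InSK C K a b :=
  ⟨C.zero, zero_mem_S C, k, hk, a, mem_hmul_zero C a, hb⟩

lemma InSK_symm (hsub : C.toHypergroup.IsSubhypergroup K) (h0 : C.zero ∈ K) {a b : H}
    (h : InSK C K a b) : InSK C K b a := by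
  obtain ⟨s, hs, k, hk, u, hu, hb⟩ := h
  have hu' : u ∈ C.hmul b (C.inv k) := rev2 C hb
  have ha : a ∈ C.hmul u (C.inv s) := rev2 C hu
  obtain ⟨w, hw, haw⟩ := assoc_mem2 C.toHypergroup hu' ha
  rw [C.comm] at hw
  obtain ⟨v, hv, hav⟩ := assoc_mem1 C.toHypergroup haw hw
  exact ⟨C.inv s, inv_S C hs, C.inv k, inv_K C hsub h0 hk, v, hv, hav⟩

lemma InSK_trans (hsub : C.toHypergroup.IsSubhypergroup K) {a b c : H}
    (h1 : InSK C K a b) (h2 : InSK C K b c) : InSK C K a c := by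
  obtain ⟨s, hs, k, hk, u, hu, hb⟩ := h1
  obtain ⟨s2, hs2, k2, hk2, w, hw, hc⟩ := h2
  obtain ⟨p, hp, hwp⟩ := assoc_mem2 C.toHypergroup hb hw
  rw [C.comm] at hp
  obtain ⟨v, hv, hwv⟩ := assoc_mem1 C.toHypergroup hwp hp
  obtain ⟨t, ht, hvt⟩ := assoc_mem2 C.toHypergroup hu hv
  obtain ⟨m, hm, hcm⟩ := assoc_mem2 C.toHypergroup hwv hc
  exact ⟨t, S_mul C hs hs2 ht, m, KK C hsub hk hk2 hm, v, hvt, hcm⟩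

lemma InSK_congr (hsub : C.toHypergroup.IsSubhypergroup K) {a a' b b' : H}
    (h : InSK C K a' b') (ha : ∃ k ∈ K, a' ∈ C.hmul a k)
    (hb : ∃ k ∈ K, b ∈ C.hmul b' k) : InSK C K a b := by
  obtain ⟨s, hs, k1, hk1, u, hu, hb'⟩ := h
  obtain ⟨k0, hk0, ha'⟩ := ha
  obtain ⟨k2, hk2, hbb⟩ := hb
  obtain ⟨p, hp, hup⟩ := assoc_mem2 C.toHypergroup ha' hu
  rw [C.comm] at hp
  obtain ⟨v, hv, huv⟩ := assoc_mem1 C.toHypergroup hup hp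
  obtain ⟨m, hm, hbm⟩ := assoc_mem2 C.toHypergroup huv hb'
  obtain ⟨m2, hm2, hbm2⟩ := assoc_mem2 C.toHypergroup hbm hbb
  exact ⟨s, hs, m2, KK C hsub (KK C hsub hk0 hk1 hm) hk2 hm2, v, hv, hbm2⟩

lemma InSK_of_betaStar (h0 : C.zero ∈ K) {a b : H}
    (h : C.toHypergroup.betaStar a b) : InSK C K a b := by
  obtain ⟨c, hc, hbc⟩ := class_sub C h
  exact ⟨c, hc, C.zero, h0, b, hbc, mem_hmul_zero C b⟩

/-! ### Quotient lemmas -/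

variable {Q : Type} (hq : Hypergroup Q) (π : H → Q)

lemma list_surj (hs : Function.Surjective π) : ∀ L : List Q, ∃ l : List H, L = l.map π := by
  intro L
  induction L with
  | nil => exact ⟨[], rfl⟩
  | cons q t ih =>
      obtain ⟨l, rfl⟩ := ih
      obtain ⟨a, rfl⟩ := hs q
      exact ⟨a :: l, rfl⟩

lemma hprod_map (hg : Hypergroup H)
    (hmm : ∀ x y, hq.hmul (π x) (π y) = π '' hg.hmul x y) :
    ∀ (l : List H) (a : H), hq.hprod (π a) (l.map π) = π '' hg.hprod a l := by
  intro l
  induction l with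
  | nil => intro a; simp [Hypergroup.hprod]
  | cons b t ih =>
      intro a
      show (⋃ q ∈ hq.hmul (π a) (π b), hq.hprod q (t.map π)) = _
      rw [hmm]
      ext z
      simp only [Set.mem_iUnion, Set.mem_image, exists_prop]
      constructor
      · rintro ⟨q, ⟨w, hw, rfl⟩, hz⟩
        rw [ih w] at hz
        obtain ⟨y, hy, rfl⟩ := hz
        exact ⟨y, Set.mem_biUnion hw hy, rfl⟩
      · rintro ⟨y, hy, rfl⟩
        have hy' : y ∈ ⋃ x ∈ hg.hmul a b, hg.hprod x t := hy
        simp only [Set.mem_iUnion, exists_prop] at hy'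
        obtain ⟨w, hw, hy⟩ := hy'
        exact ⟨π w, ⟨w, hw, rfl⟩, (ih w).symm ▸ ⟨y, hy, rfl⟩⟩

lemma sprod_map (hg : Hypergroup H)
    (hmm : ∀ x y, hq.hmul (π x) (π y) = π '' hg.hmul x y) :
    ∀ (l : List H), l ≠ [] → hq.sprod (l.map π) = π '' hg.sprod l := by
  rintro (_ | ⟨a, t⟩) hne
  · exact absurd rfl hne
  · exact hprod_map hq π hg hmm t a

lemma lift_betaStar (hg : Hypergroup H)
    (hmm : ∀ x y, hq.hmul (π x) (π y) = π '' hg.hmul x y) {a b : H}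
    (h : hg.betaStar a b) : hq.betaStar (π a) (π b) := by
  induction h with
  | rel a b hab =>
      obtain ⟨l, hal, hbl⟩ := hab
      have hne : l ≠ [] := by
        rintro rfl
        exact absurd hal (by simp [Hypergroup.sprod])
      apply Relation.EqvGen.rel
      refine ⟨l.map π, ?_, ?_⟩
      · rw [sprod_map hq π hg hmm l hne]; exact ⟨a, hal, rfl⟩
      · rw [sprod_map hq π hg hmm l hne]; exact ⟨b, hbl, rfl⟩
  | refl a => exact Relation.EqvGen.refl _
  | symm a b _ ih => exact Relation.EqvGen.symm _ _ ih
  | trans a b c _ _ ih1 ih2 => exact Relation.EqvGen.trans _ _ _ ih1 ih2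

/-! ### Descent -/

lemma pi_eq_imp (hsub : C.toHypergroup.IsSubhypergroup K) (h0 : C.zero ∈ K)
    (heq : ∀ x y, π x = π y ↔ C.toHypergroup.coset K x = C.toHypergroup.coset K y)
    {x y : H} (h : π x = π y) : ∃ k ∈ K, y ∈ C.hmul x k := by
  have := (heq x y).1 h
  have hy : y ∈ C.toHypergroup.coset K x := this ▸ mem_coset_self C h0 y
  exact (mem_coset_iff C).1 hy

lemma pi_eq_of_mem (hsub : C.toHypergroup.IsSubhypergroup K) (h0 : C.zero ∈ K)
    (heq : ∀ x y, π x = π y ↔ C.toHypergroup.coset K x = C.toHypergroup.coset K y)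
    {u w k : H} (hk : k ∈ K) (hw : w ∈ C.hmul u k) : π w = π u :=
  (heq w u).2 (coset_eq_of_mem C hsub h0 hk hw)

lemma descend (hsub : C.toHypergroup.IsSubhypergroup K) (h0 : C.zero ∈ K)
    (hπ : IsQuotientHypergroupMap C.toHypergroup K hq π) {q1 q2 : Q}
    (h : hq.betaStar q1 q2) :
    ∀ a b : H, π a = q1 → π b = q2 → InSK C K a b := by
  obtain ⟨hsurj, heq, hmm⟩ := hπ
  induction h with
  | rel q1 q2 hb =>
      intro a b ha hb'
      obtain ⟨L, h1, h2⟩ := hb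
      obtain ⟨l, rfl⟩ := list_surj π hsurj L
      have hne : l ≠ [] := by
        rintro rfl
        exact absurd h1 (by simp [Hypergroup.sprod])
      rw [sprod_map hq π C.toHypergroup hmm l hne] at h1 h2
      obtain ⟨a', ha', haa⟩ := h1
      obtain ⟨b', hb'', hbb⟩ := h2
      have hβ : C.toHypergroup.betaStar a' b' :=
        Relation.EqvGen.rel _ _ ⟨l, ha', hb''⟩
      refine InSK_congr C hsub (InSK_of_betaStar C h0 hβ) ?_ ?_
      · exact pi_eq_imp C π hsub h0 heq (by rw [haa, ha])
      · exact pi_eq_imp C π hsub h0 heq (by rw [hbb, hb'])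
  | refl q =>
      intro a b ha hb
      obtain ⟨k, hk, hbk⟩ := pi_eq_imp C π hsub h0 heq (ha.trans hb.symm)
      exact InSK_of_memK C h0 hk hbk
  | symm q1 q2 _ ih =>
      intro a b ha hb
      exact InSK_symm C hsub h0 (ih b a hb ha)
  | trans q1 q2 q3 _ _ ih1 ih2 =>
      intro a b ha hb
      obtain ⟨c, hc⟩ := hsurj q2
      exact InSK_trans C hsub (ih1 a c ha hc) (ih2 c b hc hb)

end StmtSix

open Hypergroup in
/-- for a canonical subhypergroup K of a canonical hypergroup H,
the heart of H/K is (S_β ∘ K)/K. -/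
theorem stmt6 {H Q : Type} (C : CanonicalHypergroup H) (K : Set H)
    (hsub : C.toHypergroup.IsSubhypergroup K) (h0 : C.zero ∈ K)
    (hq : Hypergroup Q) (π : H → Q)
    (hπ : IsQuotientHypergroupMap C.toHypergroup K hq π) :
    hq.heartBeta = π '' C.toHypergroup.smul C.toHypergroup.heartBeta K := by
  obtain ⟨hsurj, heq, hmm⟩ := hπ
  ext q
  constructor
  · intro hmem
    obtain ⟨h, rfl⟩ := hsurj q
    have hz : π h ∈ hq.hmul (π C.zero) (π h) := by
      rw [hmm, C.zero_hmul]
      exact ⟨h, rfl, rfl⟩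
    have hb : hq.betaStar (π h) (π C.zero) := hmem (π C.zero) (π h) hz
    have h1 : StmtSix.InSK C K h C.zero :=
      StmtSix.descend C hq π hsub h0 ⟨hsurj, heq, hmm⟩ hb h C.zero rfl rfl
    have h2 := StmtSix.InSK_symm C hsub h0 h1
    obtain ⟨s, hs, k, hk, u, hu, hh⟩ := h2
    rw [C.zero_hmul, Set.mem_singleton_iff] at hu
    subst hu
    exact ⟨h, Set.mem_biUnion hs (Set.mem_biUnion hk hh), rfl⟩
  · rintro ⟨h', hmem, rfl⟩
    simp only [Hypergroup.smul, Set.mem_iUnion, exists_prop] at hmem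
    obtain ⟨s, hs, k, hk, hh⟩ := hmem
    intro x z hz
    obtain ⟨y, rfl⟩ := hsurj x
    rw [hmm] at hz
    obtain ⟨w, hw, rfl⟩ := hz
    obtain ⟨u, hu, hwk⟩ := StmtSix.assoc_mem1 C.toHypergroup hw hh
    have hpw : π w = π u := StmtSix.pi_eq_of_mem C π hsub h0 heq hk hwk
    have hby : C.toHypergroup.betaStar u y := hs y u hu
    rw [hpw]
    exact StmtSix.lift_betaStar hq π C.toHypergroup hmm hby
end

section
/- Let H be a canonical hypergroup, K a canonical subhypergroup, and ρ a strongly regular relation on H such that the congruence modulo K is contained in ρ. Let 𝝆 denote the induced strongly regular relation on H/K. Then the quotient group (H/K)/𝝆 is isomorphic to H/(S_ρ ∘ K). -/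
open Set

open Hypergroup in
/-- if ρ is a strongly regular relation on canonical H containing the
congruence mod K, and 𝝆 is the induced relation on H/K, then (H/K)/𝝆 ≅ H/(S_ρ∘K). -/
theorem stmt7 {H Q : Type} (C : CanonicalHypergroup H) (K : Set H)
    (hsub : C.toHypergroup.IsSubhypergroup K) (h0 : C.zero ∈ K)
    (r : H → H → Prop) (hsr : C.toHypergroup.StronglyRegular r)
    (hKr : ∀ x y, C.toHypergroup.coset K x = C.toHypergroup.coset K y → r x y)
    {G : Type} [Group G] (φ : H → G)
    (hφ : C.toHypergroup.IsQuotientGroupMap r φ)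
    (hq : Hypergroup Q) (π : H → Q)
    (hπ : IsQuotientHypergroupMap C.toHypergroup K hq π)
    -- the induced relation 𝝆 on H/K:
    (rq : Q → Q → Prop) (hrq : ∀ x y : H, (rq (π x) (π y) ↔ r x y))
    {G1 : Type} [Group G1] (φ1 : Q → G1)
    (hφ1 : hq.IsQuotientGroupMap rq φ1) :
    ∃ (G2 : Type) (_ : Group G2) (φ2 : H → G2),
      C.toHypergroup.IsQuotientGroupMap
        (fun x y => C.toHypergroup.coset (C.toHypergroup.smul {h | φ h = 1} K) x =
                    C.toHypergroup.coset (C.toHypergroup.smul {h | φ h = 1} K) y) φ2 ∧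
      Nonempty (G1 ≃* G2) := by
  obtain ⟨hφs, hφr, hφm⟩ := hφ
  obtain ⟨hπs, hπc, hπm⟩ := hπ
  obtain ⟨hφ1s, hφ1r, hφ1m⟩ := hφ1
  set hg := C.toHypergroup with hhg
  set S : Set H := {h | φ h = 1} with hSdef
  -- φ 0 = 1
  have h0mem : C.zero ∈ hg.hmul C.zero C.zero := by
    rw [show hg.hmul C.zero C.zero = {C.zero} from C.zero_hmul C.zero]; rfl
  have hφ0 : φ C.zero = 1 := left_eq_mul.mp (hφm C.zero C.zero C.zero h0mem)
  have hmul_zero : ∀ x : H, hg.hmul x C.zero = {x} := by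
    intro x
    rw [show hg.hmul x C.zero = hg.hmul C.zero x from C.comm x C.zero]
    exact C.zero_hmul x
  -- coset K 0 = K
  have hcK0 : hg.coset K C.zero = K := by
    ext z
    simp only [Hypergroup.coset, Hypergroup.smul, Set.mem_iUnion, Set.mem_singleton_iff]
    constructor
    · rintro ⟨a, rfl, b, hb, hz⟩
      rw [C.zero_hmul b] at hz
      rwa [hz]
    · intro hz
      exact ⟨C.zero, rfl, z, hz, by rw [C.zero_hmul z]; rfl⟩
  -- K ⊆ S
  have hKS : K ⊆ S := by
    intro k hk
    have hcKk : hg.coset K k = K := by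
      apply Set.Subset.antisymm
      · rintro z hz
        simp only [Hypergroup.coset, Hypergroup.smul, Set.mem_iUnion,
          Set.mem_singleton_iff] at hz
        obtain ⟨a, ha, b, hb, hz⟩ := hz
        subst ha
        exact hsub.2.1 a hk b hb hz
      · exact hsub.2.2.1 k hk
    have hr : r k C.zero := hKr k C.zero (by rw [hcKk, hcK0])
    have : φ k = φ C.zero := (hφr k C.zero).mpr hr
    show φ k = 1
    rw [this, hφ0]
  have h0S : C.zero ∈ S := hφ0
  -- S ∘ K = S
  have hSK : hg.smul S K = S := by
    apply Set.Subset.antisymm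
    · intro z hz
      simp only [Hypergroup.smul, Set.mem_iUnion] at hz
      obtain ⟨s, hs, k, hk, hz⟩ := hz
      have h1 : φ s = 1 := hs
      have h2 : φ k = 1 := hKS hk
      show φ z = 1
      rw [hφm s k z hz, h1, h2, mul_one]
    · intro s hs
      simp only [Hypergroup.smul, Set.mem_iUnion]
      exact ⟨s, hs, C.zero, h0, by rw [hmul_zero s]; rfl⟩
  -- coset S x = φ ⁻¹ {φ x}
  have hcos : ∀ x z : H, z ∈ hg.coset S x ↔ φ z = φ x := by
    intro x z
    constructor
    · intro hz
      simp only [Hypergroup.coset, Hypergroup.smul, Set.mem_iUnion,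
        Set.mem_singleton_iff] at hz
      obtain ⟨a, rfl, s, hs, hz⟩ := hz
      have h1 : φ s = 1 := hs
      rw [hφm a s z hz, h1, mul_one]
    · intro hz
      have hu : z ∈ ⋃ w, hg.hmul x w := by rw [hg.reproL x]; trivial
      obtain ⟨w, hw⟩ := Set.mem_iUnion.mp hu
      have hφw : φ w = 1 := by
        have h1 : φ z = φ x * φ w := hφm x w z hw
        rw [hz] at h1
        exact (left_eq_mul.mp h1)
      simp only [Hypergroup.coset, Hypergroup.smul, Set.mem_iUnion, Set.mem_singleton_iff]
      exact ⟨x, rfl, w, hφw, hw⟩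
  have hself : ∀ x : H, x ∈ hg.coset S x := fun x => (hcos x x).mpr rfl
  -- main equivalence
  have hmain : ∀ x y : H, hg.coset (hg.smul S K) x = hg.coset (hg.smul S K) y ↔ r x y := by
    intro x y
    rw [hSK, ← hφr]
    constructor
    · intro h
      exact (hcos y x).mp (h ▸ hself x)
    · intro h
      ext z
      rw [hcos, hcos, h]
  refine ⟨G1, inferInstance, φ1 ∘ π, ⟨hφ1s.comp hπs, ?_, ?_⟩, ⟨MulEquiv.refl G1⟩⟩
  · intro a b
    show φ1 (π a) = φ1 (π b) ↔ _
    rw [hφ1r (π a) (π b), hrq a b]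
    exact (hmain a b).symm
  · intro a b z hz
    have hmem : π z ∈ hq.hmul (π a) (π b) := by
      rw [hπm a b]; exact ⟨z, hz, rfl⟩
    exact hφ1m (π a) (π b) (π z) hmem
end

section
/- A strongly regular hypergroup H is a group if and only if its heart S_β equals the set E_H of identities (equivalently, S_β is a singleton). -/
open Set

namespace Hypergroup

variable {H : Type}

lemma sprod_pair_aux (hg : Hypergroup H) (a b : H) : hg.sprod [a, b] = hg.hmul a b := by
  simp [sprod, hprod]

lemma biUnion_reindex_aux (hg : Hypergroup H) (a b x : H) (S : H → Set H) :
    (⋃ y ∈ hg.hmul a b, ⋃ w ∈ hg.hmul x y, S w)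
      = ⋃ u ∈ hg.hmul x a, ⋃ w ∈ hg.hmul u b, S w := by
  have h := hg.assoc x a b
  ext z
  simp only [Set.mem_iUnion, exists_prop]
  constructor
  · rintro ⟨y, hy, w, hw, hz⟩
    have hmem : w ∈ ⋃ t ∈ hg.hmul x a, hg.hmul t b := by
      rw [h]; exact Set.mem_biUnion hy hw
    simp only [Set.mem_iUnion, exists_prop] at hmem
    obtain ⟨u, hu, hw'⟩ := hmem
    exact ⟨u, hu, w, hw', hz⟩
  · rintro ⟨u, hu, w, hw, hz⟩
    have hmem : w ∈ ⋃ y ∈ hg.hmul a b, hg.hmul x y := by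
      rw [← h]; exact Set.mem_biUnion hu hw
    simp only [Set.mem_iUnion, exists_prop] at hmem
    obtain ⟨y, hy, hw'⟩ := hmem
    exact ⟨y, hy, w, hw', hz⟩

lemma hprod_left_aux (hg : Hypergroup H) :
    ∀ (l : List H) (x a : H),
      (⋃ h ∈ hg.hprod a l, hg.hmul x h) = hg.hprod x (a :: l) := by
  intro l
  induction l with
  | nil =>
    intro x a
    simp [hprod]
  | cons b l ih =>
    intro x a
    have e1 : (⋃ h ∈ hg.hprod a (b :: l), hg.hmul x h)
        = ⋃ y ∈ hg.hmul a b, ⋃ h ∈ hg.hprod y l, hg.hmul x h := by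
      simp only [hprod]
      ext z
      simp only [Set.mem_iUnion, exists_prop]
      tauto
    rw [e1]
    have e2 : ∀ y, (⋃ h ∈ hg.hprod y l, hg.hmul x h) = hg.hprod x (y :: l) :=
      fun y => ih x y
    simp only [e2]
    show (⋃ y ∈ hg.hmul a b, ⋃ w ∈ hg.hmul x y, hg.hprod w l) = _
    rw [hg.biUnion_reindex_aux a b x]
    rfl

lemma hprod_right_aux (hg : Hypergroup H) :
    ∀ (l : List H) (a y : H),
      (⋃ h ∈ hg.hprod a l, hg.hmul h y) = hg.hprod a (l ++ [y]) := by
  intro l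
  induction l with
  | nil =>
    intro a y
    simp [hprod]
  | cons b l ih =>
    intro a y
    simp only [hprod, List.cons_append]
    ext z
    simp only [Set.mem_iUnion, exists_prop]
    constructor
    · rintro ⟨h, ⟨w, hw, hh⟩, hz⟩
      refine ⟨w, hw, ?_⟩
      show z ∈ hg.hprod w (l ++ [y])
      rw [← ih w y]
      simp only [Set.mem_iUnion, exists_prop]
      exact ⟨h, hh, hz⟩
    · rintro ⟨w, hw, hz⟩
      have hz : z ∈ hg.hprod w (l ++ [y]) := hz
      rw [← ih w y] at hz
      simp only [Set.mem_iUnion, exists_prop] at hz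
      obtain ⟨h, hh, hz⟩ := hz
      exact ⟨h, ⟨w, hw, hh⟩, hz⟩

lemma beta_mul_left_aux (hg : Hypergroup H) {h h' x z w : H} (hb : hg.beta h h')
    (hz : z ∈ hg.hmul x h) (hw : w ∈ hg.hmul x h') : hg.beta z w := by
  obtain ⟨l, hh, hh'⟩ := hb
  match l with
  | [] => simp [sprod] at hh
  | a :: l =>
    refine ⟨x :: a :: l, ?_, ?_⟩
    · show z ∈ hg.hprod x (a :: l)
      rw [← hg.hprod_left_aux l x a]
      exact Set.mem_biUnion hh hz
    · show w ∈ hg.hprod x (a :: l)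
      rw [← hg.hprod_left_aux l x a]
      exact Set.mem_biUnion hh' hw

lemma beta_mul_right_aux (hg : Hypergroup H) {h h' x z w : H} (hb : hg.beta h h')
    (hz : z ∈ hg.hmul h x) (hw : w ∈ hg.hmul h' x) : hg.beta z w := by
  obtain ⟨l, hh, hh'⟩ := hb
  match l with
  | [] => simp [sprod] at hh
  | a :: l =>
    refine ⟨a :: (l ++ [x]), ?_, ?_⟩
    · show z ∈ hg.hprod a (l ++ [x])
      rw [← hg.hprod_right_aux l a x]
      exact Set.mem_biUnion hh hz
    · show w ∈ hg.hprod a (l ++ [x])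
      rw [← hg.hprod_right_aux l a x]
      exact Set.mem_biUnion hh' hw

lemma betaStar_mul_aux (hg : Hypergroup H) :
    ∀ h h', hg.betaStar h h' →
      ∀ x, (∀ z ∈ hg.hmul x h, ∀ w ∈ hg.hmul x h', hg.betaStar z w) ∧
           (∀ z ∈ hg.hmul h x, ∀ w ∈ hg.hmul h' x, hg.betaStar z w) := by
  intro h h' hb
  induction hb with
  | rel h h' hb =>
    intro x
    exact ⟨fun z hz w hw => Relation.EqvGen.rel _ _ (hg.beta_mul_left_aux hb hz hw),
           fun z hz w hw => Relation.EqvGen.rel _ _ (hg.beta_mul_right_aux hb hz hw)⟩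
  | refl h =>
    intro x
    have hbr : hg.beta h h := ⟨[h], by simp [sprod, hprod], by simp [sprod, hprod]⟩
    exact ⟨fun z hz w hw => Relation.EqvGen.rel _ _ (hg.beta_mul_left_aux hbr hz hw),
           fun z hz w hw => Relation.EqvGen.rel _ _ (hg.beta_mul_right_aux hbr hz hw)⟩
  | symm h h' _ ih =>
    intro x
    exact ⟨fun z hz w hw => Relation.EqvGen.symm _ _ ((ih x).1 w hw z hz),
           fun z hz w hw => Relation.EqvGen.symm _ _ ((ih x).2 w hw z hz)⟩
  | trans h h' h'' _ _ ih1 ih2 =>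
    intro x
    constructor
    · intro z hz w hw
      obtain ⟨v, hv⟩ := hg.nonempty x h'
      exact Relation.EqvGen.trans _ _ _ ((ih1 x).1 z hz v hv) ((ih2 x).1 v hv w hw)
    · intro z hz w hw
      obtain ⟨v, hv⟩ := hg.nonempty h' x
      exact Relation.EqvGen.trans _ _ _ ((ih1 x).2 z hz v hv) ((ih2 x).2 v hv w hw)

end Hypergroup

open Hypergroup in
/-- a strongly regular hypergroup is a group iff S_β = E_H. -/
theorem stmt17 {H : Type} (hg : Hypergroup H)
    (hsr : hg.IsStronglyRegularHypergroup) :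
    (∃ m : H → H → H, (∀ a b, hg.hmul a b = {m a b}) ∧
      ∃ (e : H) (inv : H → H),
        (∀ a, m e a = a) ∧ (∀ a, m a e = a) ∧ (∀ a, m (inv a) a = e) ∧
        (∀ a b c, m (m a b) c = m a (m b c))) ↔
    hg.heartBeta = hg.Ident := by
  constructor
  · -- group ⟹ heart = identities
    rintro ⟨m, hm, e, inv, he1, he2, hinv, hassoc⟩
    have hsing : ∀ (l : List H) (a : H), ∃ c, hg.hprod a l = {c} := by
      intro l
      induction l with
      | nil => intro a; exact ⟨a, rfl⟩
      | cons b l ih =>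
        intro a
        have h1 : hg.hprod a (b :: l) = hg.hprod (m a b) l := by
          show (⋃ x ∈ hg.hmul a b, hg.hprod x l) = _
          rw [hm]
          simp
        rw [h1]; exact ih (m a b)
    have hbeq : ∀ a b, hg.beta a b → a = b := by
      rintro a b ⟨l, ha, hb⟩
      match l with
      | [] => simp [Hypergroup.sprod] at ha
      | c :: l =>
        obtain ⟨d, hd⟩ := hsing l c
        have ha' : a ∈ hg.hprod c l := ha
        have hb' : b ∈ hg.hprod c l := hb
        rw [hd, Set.mem_singleton_iff] at ha' hb'
        rw [ha', hb']
    have hbseq : ∀ a b, hg.betaStar a b → a = b := by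
      intro a b hab
      induction hab with
      | rel a b h => exact hbeq a b h
      | refl a => rfl
      | symm a b _ ih => exact ih.symm
      | trans a b c _ _ ih1 ih2 => exact ih1.trans ih2
    have hIdent : hg.Ident = {e} := by
      ext e'
      simp only [Hypergroup.Ident, Set.mem_setOf_eq, Set.mem_singleton_iff]
      constructor
      · intro h
        have h1 := (h e).1
        rw [hm, Set.mem_singleton_iff] at h1
        exact (he2 e').symm.trans h1.symm
      · rintro rfl x
        constructor
        · rw [hm, Set.mem_singleton_iff, he1]
        · rw [hm, Set.mem_singleton_iff, he2]
    have hHeart : hg.heartBeta = {e} := by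
      ext h
      simp only [Hypergroup.heartBeta, Set.mem_setOf_eq, Set.mem_singleton_iff]
      constructor
      · intro hh
        have h1 := hh e (m e h) (by rw [hm]; rfl)
        have h2 := hbseq _ _ h1
        rw [he1] at h2
        exact h2
      · rintro rfl x z hz
        rw [hm, Set.mem_singleton_iff] at hz
        rw [hz, he2]
        exact Relation.EqvGen.refl x
    rw [hHeart, hIdent]
  · -- heart = identities ⟹ group
    intro hEq
    obtain ⟨⟨e0, he0⟩, hC⟩ := hsr
    have huniq : ∀ e1 ∈ hg.Ident, ∀ e2 ∈ hg.Ident, e1 = e2 := by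
      intro e1 h1 e2 h2
      obtain ⟨y, hy⟩ := hC e1
      have m1 : e1 ∈ hg.Cset e1 := ⟨e1, h1, (h1 e1).1, (h1 e1).1⟩
      have m2 : e2 ∈ hg.Cset e1 := ⟨e1, h1, (h2 e1).1, (h2 e1).2⟩
      rw [hy, Set.mem_singleton_iff] at m1 m2
      rw [m1, m2]
    have hinvex : ∀ x, ∃ y, e0 ∈ hg.hmul y x ∧ e0 ∈ hg.hmul x y := by
      intro x
      obtain ⟨y, hy⟩ := hC x
      have hyC : y ∈ hg.Cset x := by rw [hy]; rfl
      obtain ⟨e', he', hyx, hxy⟩ := hyC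
      have : e' = e0 := huniq e' he' e0 he0
      rw [this] at hyx hxy
      exact ⟨y, hyx, hxy⟩
    choose inv hinvl hinvr using hinvex
    have heartE : ∀ h, hg.betaStar h e0 → h = e0 := by
      intro h hh
      have hmem : h ∈ hg.heartBeta := by
        intro x z hz
        exact (hg.betaStar_mul_aux h e0 hh x).1 z hz x (he0 x).2
      rw [hEq] at hmem
      exact huniq h hmem e0 he0
    have key : ∀ u v, hg.betaStar u v → u = v := by
      intro u v huv
      -- every element of (inv u)∘v and v∘(inv u) equals e0
      have hL : ∀ w ∈ hg.hmul (inv u) v, w = e0 := by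
        intro w hw
        have := (hg.betaStar_mul_aux u v huv (inv u)).1 e0 (hinvl u) w hw
        exact heartE w (Relation.EqvGen.symm _ _ this)
      have hR : ∀ w ∈ hg.hmul v (inv u), w = e0 := by
        intro w hw
        have := (hg.betaStar_mul_aux u v huv (inv u)).2 e0 (hinvr u) w hw
        exact heartE w (Relation.EqvGen.symm _ _ this)
      obtain ⟨w1, hw1⟩ := hg.nonempty (inv u) v
      obtain ⟨w2, hw2⟩ := hg.nonempty v (inv u)
      have e1 : e0 ∈ hg.hmul (inv u) v := by rw [← hL w1 hw1]; exact hw1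
      have e2 : e0 ∈ hg.hmul v (inv u) := by rw [← hR w2 hw2]; exact hw2
      obtain ⟨y, hy⟩ := hC (inv u)
      have mu : u ∈ hg.Cset (inv u) := ⟨e0, he0, hinvr u, hinvl u⟩
      have mv : v ∈ hg.Cset (inv u) := ⟨e0, he0, e2, e1⟩
      rw [hy, Set.mem_singleton_iff] at mu mv
      rw [mu, mv]
    have hsingle : ∀ a b, ∀ u ∈ hg.hmul a b, ∀ v ∈ hg.hmul a b, u = v := by
      intro a b u hu v hv
      refine key u v (Relation.EqvGen.rel _ _ ⟨[a, b], ?_, ?_⟩)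
      · rw [hg.sprod_pair_aux]; exact hu
      · rw [hg.sprod_pair_aux]; exact hv
    choose m hm using fun a b => hg.nonempty a b
    have hm' : ∀ a b, hg.hmul a b = {m a b} := by
      intro a b
      ext c
      simp only [Set.mem_singleton_iff]
      exact ⟨fun hc => hsingle a b c hc (m a b) (hm a b),
             fun hc => hc ▸ hm a b⟩
    refine ⟨m, hm', e0, inv, ?_, ?_, ?_, ?_⟩
    · intro a; exact hsingle e0 a (m e0 a) (hm e0 a) a (he0 a).1
    · intro a; exact hsingle a e0 (m a e0) (hm a e0) a (he0 a).2
    · intro a; exact hsingle (inv a) a (m (inv a) a) (hm (inv a) a) e0 (hinvl a)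
    · intro a b c
      have h1 : m (m a b) c ∈ ⋃ x ∈ hg.hmul a b, hg.hmul x c :=
        Set.mem_biUnion (hm a b) (hm (m a b) c)
      rw [hg.assoc a b c] at h1
      simp only [Set.mem_iUnion, exists_prop] at h1
      obtain ⟨y, hy, hmem⟩ := h1
      have hy' : y = m b c := hsingle b c y hy (m b c) (hm b c)
      rw [hy'] at hmem
      exact hsingle a (m b c) (m (m a b) c) hmem (m a (m b c)) (hm a (m b c))
end
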